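/- Let ρ, σ be density matrices on ℂⁿ with supp(ρ) ⊆ supp(σ). Then lim_{α → ∞} D̃_α(ρ‖σ) = log inf{λ > 0 : ρ ≤ λσ}, i.e., the sandwiched Rényi relative α-entropy converges to the relative max-entropy as α → ∞. -/

import Mathlib

/-!
Write `A_α = σ^((1-α)/2α) ρ σ^((1-α)/2α)`, so that `D̃_α = (α-1)⁻¹ log Tr A_α^α`, and squeeze
`Tr A_α^α` between `λ_max(A_α)^α` and `n λ_max(A_α)^α`.

If `ρ ≤ λσ`, then `A_α ≤ λ σ^(1/α) ≤ λ` (as `Tr σ = 1` forces `σ ≤ 1`), so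
`D̃_α ≤ (log n + α log λ)/(α-1) → log λ`.

If `ρ ≰ λσ`, pick `v` with `⟨v, ρv⟩ > λ⟨v, σv⟩`. Since `supp ρ ⊆ supp σ`, conjugating `A_α` by
`σ^((α-1)/2α)` gives back `ρ`, so `u = σ^((α-1)/2α) v` has Rayleigh quotient
`⟨v, ρv⟩ / ⟨v, σ^((α-1)/α) v⟩` for `A_α`. Hence `D̃_α ≥ α/(α-1) · log` of this quotient, which
tends to `log (⟨v, ρv⟩ / ⟨v, σv⟩) > log λ`.
-/

open Matrix
open scoped ComplexOrder

/-- Real power of a Hermitian matrix via the spectral theorem (junk value `0` if not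
Hermitian). Powers are taken on the support: zero eigenvalues are sent to `0 ^ t`. -/
noncomputable def Matrix.rpowH {m : Type*} [Fintype m] [DecidableEq m]
    (A : Matrix m m ℂ) (t : ℝ) : Matrix m m ℂ :=
  if hA : A.IsHermitian then
    (hA.eigenvectorUnitary : Matrix m m ℂ) *
      Matrix.diagonal (fun i => ((hA.eigenvalues i ^ t : ℝ) : ℂ)) *
      star (hA.eigenvectorUnitary : Matrix m m ℂ)
  else 0

/-- The sandwiched Rényi relative `α`-entropy
`D̃_α(ρ‖σ) = (α-1)⁻¹ log Tr[(σ^((1-α)/(2α)) ρ σ^((1-α)/(2α)))^α]`. -/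
noncomputable def sandwichedRenyi {m : Type*} [Fintype m] [DecidableEq m]
    (α : ℝ) (ρ σ : Matrix m m ℂ) : ℝ :=
  (α - 1)⁻¹ *
    Real.log (Matrix.trace
      (Matrix.rpowH (Matrix.rpowH σ ((1 - α) / (2 * α)) * ρ *
        Matrix.rpowH σ ((1 - α) / (2 * α))) α)).re

open scoped MatrixOrder

namespace Matrix

section

variable {m : Type*} [Fintype m]

lemma re_dotProduct_mulVec_le_of_le {A B : Matrix m m ℂ} (h : A ≤ B) (v : m → ℂ) :
    (star v ⬝ᵥ A *ᵥ v).re ≤ (star v ⬝ᵥ B *ᵥ v).re := by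
  have := (le_iff.mp h).re_dotProduct_nonneg v
  rw [sub_mulVec, dotProduct_sub] at this
  simpa using this

lemma exists_re_dotProduct_mulVec_lt_of_not_le {A B : Matrix m m ℂ} (hA : A.IsHermitian)
    (hB : B.IsHermitian) (h : ¬ A ≤ B) :
    ∃ v : m → ℂ, (star v ⬝ᵥ B *ᵥ v).re < (star v ⬝ᵥ A *ᵥ v).re := by
  by_contra! hle
  refine h (le_iff.mpr (PosSemidef.of_dotProduct_mulVec_nonneg (hB.sub hA) fun v => ?_))
  have := (hB.sub hA).im_star_dotProduct_mulVec_self v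
  rw [sub_mulVec, dotProduct_sub] at this ⊢
  exact Complex.nonneg_iff.mpr ⟨by simpa using hle v, this.symm⟩

lemma star_mulVec_dotProduct_mulVec_mulVec (A B : Matrix m m ℂ) (v : m → ℂ) :
    star (B *ᵥ v) ⬝ᵥ A *ᵥ (B *ᵥ v) = star v ⬝ᵥ (Bᴴ * A * B) *ᵥ v := by
  rw [star_mulVec, ← mulVec_mulVec, dotProduct_mulVec, vecMul_vecMul, ← dotProduct_mulVec,
    mulVec_mulVec, Matrix.mul_assoc]

lemma one_le_of_le_smul_of_trace_eq_one {ρ σ : Matrix m m ℂ} (hρ1 : ρ.trace = 1)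
    (hσ1 : σ.trace = 1) {l : ℝ} (h : ρ ≤ l • σ) : 1 ≤ l := by
  have := (le_iff.mp h).trace_nonneg
  rw [trace_sub, trace_smul, hρ1, hσ1, Complex.nonneg_iff] at this
  simpa using this.1

variable [DecidableEq m]

lemma re_dotProduct_algebraMap_mulVec (r : ℝ) (v : m → ℂ) :
    (star v ⬝ᵥ algebraMap ℝ (Matrix m m ℂ) r *ᵥ v).re = r * (star v ⬝ᵥ v).re := by
  simp [Algebra.algebraMap_eq_smul_one, smul_mulVec, Complex.real_smul]

lemma continuousOn_spectrum_real (A : Matrix m m ℂ) (f : ℝ → ℝ) :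
    ContinuousOn f (spectrum ℝ A) :=
  A.finite_real_spectrum.continuousOn f

lemma IsHermitian.rpowH_eq_cfc {A : Matrix m m ℂ} (hA : A.IsHermitian) (t : ℝ) :
    A.rpowH t = cfc (· ^ t : ℝ → ℝ) A := by
  rw [rpowH, dif_pos hA, hA.cfc_eq, IsHermitian.cfc, Unitary.conjStarAlgAut_apply]
  rfl

lemma IsHermitian.re_trace_rpowH {A : Matrix m m ℂ} (hA : A.IsHermitian) (t : ℝ) :
    (A.rpowH t).trace.re = ∑ i, hA.eigenvalues i ^ t := by
  rw [rpowH, dif_pos hA, trace_mul_cycle, Unitary.coe_star_mul_self, one_mul, trace_diagonal,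
    Complex.re_sum]
  simp only [Complex.ofReal_re]

lemma IsHermitian.eigenvalues_le_of_le_algebraMap {A : Matrix m m ℂ} (hA : A.IsHermitian)
    {l : ℝ} (h : A ≤ algebraMap ℝ _ l) (i : m) : hA.eigenvalues i ≤ l :=
  (le_algebraMap_iff_spectrum_le hA.isSelfAdjoint).mp h _ (hA.eigenvalues_mem_spectrum_real i)

lemma IsHermitian.le_algebraMap_eigenvalues {A : Matrix m m ℂ} (hA : A.IsHermitian) {i : m}
    (hi : ∀ j, hA.eigenvalues j ≤ hA.eigenvalues i) : A ≤ algebraMap ℝ _ (hA.eigenvalues i) :=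
  le_algebraMap_of_spectrum_le (by simpa [hA.spectrum_real_eq_range_eigenvalues] using hi)
    hA.isSelfAdjoint

lemma PosSemidef.re_trace_rpowH_pos {A : Matrix m m ℂ} (hA : A.PosSemidef) (hA0 : A ≠ 0)
    (t : ℝ) : 0 < (A.rpowH t).trace.re := by
  obtain ⟨i, hi⟩ := Function.ne_iff.mp (mt hA.1.eigenvalues_eq_zero_iff.mp hA0)
  rw [hA.1.re_trace_rpowH]
  exact Finset.sum_pos' (fun j _ => Real.rpow_nonneg (hA.eigenvalues_nonneg j) t)
    ⟨i, Finset.mem_univ i, Real.rpow_pos_of_pos ((hA.eigenvalues_nonneg i).lt_of_ne' hi) t⟩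

lemma PosSemidef.re_trace_rpowH_le {A : Matrix m m ℂ} (hA : A.PosSemidef) {l : ℝ}
    (h : A ≤ algebraMap ℝ _ l) {t : ℝ} (ht : 0 ≤ t) :
    (A.rpowH t).trace.re ≤ Fintype.card m * l ^ t := by
  rw [hA.1.re_trace_rpowH, ← nsmul_eq_mul, ← Finset.card_univ, ← Finset.sum_const]
  exact Finset.sum_le_sum fun i _ => Real.rpow_le_rpow (hA.eigenvalues_nonneg i)
    (hA.1.eigenvalues_le_of_le_algebraMap h i) ht

lemma PosSemidef.div_rpow_le_re_trace_rpowH {A : Matrix m m ℂ} (hA : A.PosSemidef)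
    {u : m → ℂ} (hu : 0 < (star u ⬝ᵥ u).re) {t : ℝ} (ht : 0 ≤ t) :
    ((star u ⬝ᵥ A *ᵥ u).re / (star u ⬝ᵥ u).re) ^ t ≤ (A.rpowH t).trace.re := by
  have : Nonempty m := by
    by_contra! h
    simp [dotProduct, Finset.univ_eq_empty] at hu
  obtain ⟨i, hi⟩ := Finite.exists_max hA.1.eigenvalues
  have hQ : (star u ⬝ᵥ A *ᵥ u).re ≤ hA.1.eigenvalues i * (star u ⬝ᵥ u).re := by
    simpa [re_dotProduct_algebraMap_mulVec] using
      re_dotProduct_mulVec_le_of_le (hA.1.le_algebraMap_eigenvalues hi) u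
  rw [hA.1.re_trace_rpowH]
  calc _ ≤ hA.1.eigenvalues i ^ t :=
        Real.rpow_le_rpow (div_nonneg (hA.re_dotProduct_nonneg u) hu.le)
          ((div_le_iff₀ hu).mpr hQ) ht
    _ ≤ _ := Finset.single_le_sum (fun j _ => Real.rpow_nonneg (hA.eigenvalues_nonneg j) t)
        (Finset.mem_univ i)

variable {ρ σ : Matrix m m ℂ}

lemma PosSemidef.le_one_of_trace_eq_one (hσ : σ.PosSemidef) (hσ1 : σ.trace = 1) : σ ≤ 1 := by
  have hsum : ∑ i, hσ.1.eigenvalues i = 1 := by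
    have := congrArg Complex.re hσ.1.trace_eq_sum_eigenvalues
    rw [hσ1] at this
    simpa using this.symm
  refine CFC.le_one (R := ℝ) (fun x hx => ?_) hσ.1.isSelfAdjoint
  obtain ⟨i, rfl⟩ := hσ.1.spectrum_real_eq_range_eigenvalues ▸ hx
  exact hsum ▸ Finset.single_le_sum (fun j _ => hσ.eigenvalues_nonneg j) (Finset.mem_univ i)

lemma PosSemidef.rpowH_mul_mul_rpowH (hρ : ρ.PosSemidef) (hσ : σ.IsHermitian) (t : ℝ) :
    (σ.rpowH t * ρ * σ.rpowH t).PosSemidef := by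
  have hC : (σ.rpowH t)ᴴ = σ.rpowH t := by
    rw [hσ.rpowH_eq_cfc]
    exact IsSelfAdjoint.star_eq (cfc_predicate _ σ)
  simpa [hC] using hρ.mul_mul_conjTranspose_same (σ.rpowH t)

lemma mul_eq_zero_of_ker_le {M : Matrix m m ℂ}
    (hsupp : ∀ v : m → ℂ, σ *ᵥ v = 0 → ρ *ᵥ v = 0) (h : σ * M = 0) : ρ * M = 0 := by
  ext i j
  have := congrFun (hsupp (M *ᵥ Pi.single j 1) (by rw [mulVec_mulVec, h, zero_mulVec])) i
  rwa [mulVec_mulVec, mulVec_single_one] at this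

lemma mul_cfc_eq_self_of_ker_le (hσ : σ.IsHermitian)
    (hsupp : ∀ v : m → ℂ, σ *ᵥ v = 0 → ρ *ᵥ v = 0) {f : ℝ → ℝ}
    (hf : ∀ x ∈ spectrum ℝ σ, x ≠ 0 → f x = 1) : ρ * cfc f σ = ρ := by
  have hc := σ.continuousOn_spectrum_real
  have hker : σ * cfc (fun x => 1 - f x) σ = 0 := by
    nth_rw 1 [← cfc_id' ℝ σ hσ.isSelfAdjoint]
    rw [← cfc_mul _ _ σ (hc _) (hc _), ← cfc_zero ℝ σ]
    refine cfc_congr fun x hx => ?_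
    by_cases hx0 : x = 0 <;> simp [hx0, hf x hx]
  have := mul_eq_zero_of_ker_le hsupp hker
  rwa [cfc_sub _ _ σ (hc _) (hc _), cfc_const_one ℝ σ, mul_sub, mul_one, sub_eq_zero,
    eq_comm] at this

lemma cfc_mul_mul_cfc_eq_self_of_ker_le (hρ : ρ.IsHermitian) (hσ : σ.IsHermitian)
    (hsupp : ∀ v : m → ℂ, σ *ᵥ v = 0 → ρ *ᵥ v = 0) {f : ℝ → ℝ}
    (hf : ∀ x ∈ spectrum ℝ σ, x ≠ 0 → f x = 1) : cfc f σ * ρ * cfc f σ = ρ := by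
  have hρf := mul_cfc_eq_self_of_ker_le hσ hsupp hf
  have hfρ : cfc f σ * ρ = ρ := by
    simpa [(cfc_predicate f σ).star_eq, hρ.star_eq] using congrArg star hρf
  rw [hfρ, hρf]

lemma exists_pos_le_smul_of_ker_le (hρ : ρ.IsHermitian) (hσ : σ.PosSemidef)
    (hsupp : ∀ v : m → ℂ, σ *ᵥ v = 0 → ρ *ᵥ v = 0) : ∃ l : ℝ, 0 < l ∧ ρ ≤ l • σ := by
  have hc := σ.continuousOn_spectrum_real
  obtain ⟨c, hc0, hρc⟩ : ∃ c : ℝ, 0 < c ∧ ρ ≤ algebraMap ℝ _ c := by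
    obtain ⟨c, hc⟩ := ρ.finite_real_spectrum.bddAbove
    exact ⟨max c 1, by positivity, le_algebraMap_of_spectrum_le
      (fun x hx => (hc hx).trans (le_max_left _ _)) hρ.isSelfAdjoint⟩
  obtain ⟨L, hL0, hL⟩ : ∃ L : ℝ, 0 < L ∧ ∀ x ∈ spectrum ℝ σ, x⁻¹ ≤ L := by
    obtain ⟨L, hL⟩ := (σ.finite_real_spectrum.image (·⁻¹)).bddAbove
    exact ⟨max L 1, by positivity,
      fun x hx => (hL (Set.mem_image_of_mem _ hx)).trans (le_max_left _ _)⟩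
  refine ⟨c * L, by positivity, ?_⟩
  -- `x * x⁻¹` is the indicator of `x ≠ 0`, so `cfc` turns it into the support projection of `σ`
  calc ρ = cfc (fun x : ℝ => x * x⁻¹) σ * ρ * cfc (fun x : ℝ => x * x⁻¹) σ :=
        (cfc_mul_mul_cfc_eq_self_of_ker_le hρ hσ.1 hsupp fun x _ hx0 => mul_inv_cancel₀ hx0).symm
    _ ≤ cfc (fun x : ℝ => x * x⁻¹) σ * algebraMap ℝ _ c * cfc (fun x : ℝ => x * x⁻¹) σ :=
        IsSelfAdjoint.conjugate_le_conjugate hρc (cfc_predicate _ σ)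
    _ = cfc (fun x : ℝ => x * x⁻¹ * c * (x * x⁻¹)) σ := by
        rw [← cfc_const c σ, ← cfc_mul _ _ σ (hc _) (hc _), ← cfc_mul _ _ σ (hc _) (hc _)]
    _ ≤ cfc (fun x : ℝ => c * L * x) σ := by
        refine cfc_mono (fun x hx => ?_) (hc _) (hc _)
        rcases (spectrum_nonneg_of_nonneg hσ.nonneg hx).eq_or_lt with rfl | hx0
        · simp
        · have : 1 ≤ L * x := by
            simpa [hx0.ne'] using mul_le_mul_of_nonneg_right (hL x hx) hx0.le
          simp only [mul_inv_cancel₀ hx0.ne', one_mul, mul_one]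
          nlinarith
    _ = (c * L) • σ := cfc_const_mul_id _ σ hσ.1.isSelfAdjoint

lemma cfc_rpow_neg_mul_mul_eq_self (hρ : ρ.IsHermitian) (hσ : σ.PosSemidef)
    (hsupp : ∀ v : m → ℂ, σ *ᵥ v = 0 → ρ *ᵥ v = 0) (t : ℝ) :
    cfc (· ^ (-t) : ℝ → ℝ) σ * (cfc (· ^ t : ℝ → ℝ) σ * ρ * cfc (· ^ t : ℝ → ℝ) σ) *
      cfc (· ^ (-t) : ℝ → ℝ) σ = ρ := by
  have hc := σ.continuousOn_spectrum_real
  have hDC : cfc (· ^ (-t) : ℝ → ℝ) σ * cfc (· ^ t : ℝ → ℝ) σ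
      = cfc (fun x : ℝ => x ^ (-t) * x ^ t) σ := (cfc_mul _ _ σ (hc _) (hc _)).symm
  have hCD : cfc (· ^ t : ℝ → ℝ) σ * cfc (· ^ (-t) : ℝ → ℝ) σ
      = cfc (fun x : ℝ => x ^ (-t) * x ^ t) σ := by
    rw [← cfc_mul _ _ σ (hc _) (hc _)]
    simp only [mul_comm]
  calc _ = (cfc (· ^ (-t) : ℝ → ℝ) σ * cfc (· ^ t : ℝ → ℝ) σ) * ρ *
        (cfc (· ^ t : ℝ → ℝ) σ * cfc (· ^ (-t) : ℝ → ℝ) σ) := by simp only [mul_assoc]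
    _ = ρ := by
      rw [hDC, hCD]
      refine cfc_mul_mul_cfc_eq_self_of_ker_le hρ hσ.1 hsupp fun x hx hx0 => ?_
      have hx : 0 < x := (spectrum_nonneg_of_nonneg hσ.nonneg hx).lt_of_ne' hx0
      rw [← Real.rpow_add hx, neg_add_cancel, Real.rpow_zero]

lemma cfc_rpow_mul_mul_le_algebraMap (hσ : σ.PosSemidef) (hσ1 : σ ≤ 1) {l : ℝ} (hl : 0 ≤ l)
    (h : ρ ≤ l • σ) {t : ℝ} (ht : 0 ≤ 1 + 2 * t) :
    cfc (· ^ t : ℝ → ℝ) σ * ρ * cfc (· ^ t : ℝ → ℝ) σ ≤ algebraMap ℝ _ l := by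
  have hc := σ.continuousOn_spectrum_real
  have hCσC : cfc (· ^ t : ℝ → ℝ) σ * σ * cfc (· ^ t : ℝ → ℝ) σ ≤ 1 := by
    nth_rw 2 [← cfc_id' ℝ σ hσ.1.isSelfAdjoint]
    rw [← cfc_mul _ _ σ (hc _) (hc _), ← cfc_mul _ _ σ (hc _) (hc _)]
    refine cfc_le_one _ σ fun x hx => ?_
    have hx1 : x ≤ 1 := (le_algebraMap_iff_spectrum_le hσ.1.isSelfAdjoint).mp
      (by simpa using hσ1) x hx
    rcases (spectrum_nonneg_of_nonneg hσ.nonneg hx).eq_or_lt with rfl | hx0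
    · simp
    · rw [← Real.rpow_add_one hx0.ne', ← Real.rpow_add hx0]
      exact Real.rpow_le_one hx0.le hx1 (by linarith)
  calc _ ≤ cfc (· ^ t : ℝ → ℝ) σ * (l • σ) * cfc (· ^ t : ℝ → ℝ) σ :=
        IsSelfAdjoint.conjugate_le_conjugate h (cfc_predicate _ σ)
    _ = l • (cfc (· ^ t : ℝ → ℝ) σ * σ * cfc (· ^ t : ℝ → ℝ) σ) := by
        rw [mul_smul_comm, smul_mul_assoc]
    _ ≤ l • 1 := smul_le_smul_of_nonneg_left hCσC hl
    _ = algebraMap ℝ _ l := (Algebra.algebraMap_eq_smul_one l).symm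

open Filter Topology in
lemma IsHermitian.tendsto_cfc_rpow_nhds_one (hσ : σ.IsHermitian) :
    Tendsto (fun β : ℝ => cfc (· ^ β : ℝ → ℝ) σ) (𝓝 1) (𝓝 σ) := by
  have hcont : ContinuousAt (fun β : ℝ => cfc (· ^ β : ℝ → ℝ) σ) 1 := by
    simp_rw [hσ.cfc_eq, IsHermitian.cfc, Unitary.conjStarAlgAut_apply]
    refine (continuousAt_const.mul ((continuous_id.matrix_diagonal).continuousAt.comp
      (continuousAt_pi.2 fun i => ?_))).mul continuousAt_const
    exact Complex.continuous_ofReal.continuousAt.comp (Real.continuousAt_const_rpow' one_ne_zero)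
  simpa [Real.rpow_one, cfc_id' ℝ σ hσ.isSelfAdjoint] using hcont.tendsto

end

end Matrix

open Filter Topology

lemma tendsto_sub_one_div_atTop : Tendsto (fun α : ℝ => (α - 1) / α) atTop (𝓝 1) := by
  have := (tendsto_inv_atTop_zero (𝕜 := ℝ)).const_sub 1
  rw [sub_zero] at this
  refine this.congr' ?_
  filter_upwards [eventually_ne_atTop 0] with α hα
  field_simp

lemma tendsto_div_sub_one_atTop : Tendsto (fun α : ℝ => α / (α - 1)) atTop (𝓝 1) := by
  simpa using tendsto_sub_one_div_atTop.inv₀ one_ne_zero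

section SandwichedRenyi

variable {m : Type*} [Fintype m] [DecidableEq m] {ρ σ : Matrix m m ℂ} {α : ℝ}

lemma sandwichedRenyi_le (hρ : ρ.PosSemidef) (hσ : σ.PosSemidef) (hσ1 : σ ≤ 1)
    (hsupp : ∀ v : m → ℂ, σ *ᵥ v = 0 → ρ *ᵥ v = 0) (hρ0 : ρ ≠ 0) {l : ℝ} (hl : 0 < l)
    (h : ρ ≤ l • σ) (hα : 1 < α) :
    sandwichedRenyi α ρ σ ≤ (α - 1)⁻¹ * (Real.log (Fintype.card m) + α * Real.log l) := by
  have : Nonempty m := by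
    by_contra! hm
    exact hρ0 (Subsingleton.elim _ _)
  set t := (1 - α) / (2 * α)
  have hA := hρ.rpowH_mul_mul_rpowH hσ.1 t
  have hA0 : σ.rpowH t * ρ * σ.rpowH t ≠ 0 := by
    intro h0
    apply hρ0
    rw [← cfc_rpow_neg_mul_mul_eq_self hρ.1 hσ hsupp t, ← hσ.1.rpowH_eq_cfc t, h0, mul_zero,
      zero_mul]
  have hAl : σ.rpowH t * ρ * σ.rpowH t ≤ algebraMap ℝ _ l := by
    rw [hσ.1.rpowH_eq_cfc]
    refine cfc_rpow_mul_mul_le_algebraMap hσ hσ1 hl.le h ?_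
    have : 1 + 2 * t = α⁻¹ := by simp only [t]; field_simp; ring
    rw [this]
    positivity
  refine mul_le_mul_of_nonneg_left ?_ (inv_nonneg.2 (by linarith))
  rw [← Real.log_rpow hl, ← Real.log_mul (by positivity) (by positivity)]
  exact Real.log_le_log (hA.re_trace_rpowH_pos hA0 α) (hA.re_trace_rpowH_le hAl (by linarith))

lemma le_sandwichedRenyi (hρ : ρ.PosSemidef) (hσ : σ.PosSemidef)
    (hsupp : ∀ v : m → ℂ, σ *ᵥ v = 0 → ρ *ᵥ v = 0) (hα : 1 < α) (v : m → ℂ)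
    (hQ : 0 < (star v ⬝ᵥ ρ *ᵥ v).re)
    (hS : 0 < (star v ⬝ᵥ cfc (· ^ ((α - 1) / α) : ℝ → ℝ) σ *ᵥ v).re) :
    α / (α - 1) * Real.log ((star v ⬝ᵥ ρ *ᵥ v).re /
      (star v ⬝ᵥ cfc (· ^ ((α - 1) / α) : ℝ → ℝ) σ *ᵥ v).re) ≤ sandwichedRenyi α ρ σ := by
  set t := (1 - α) / (2 * α)
  set D := cfc (· ^ (-t) : ℝ → ℝ) σ
  have hD : Dᴴ = D := IsSelfAdjoint.star_eq (cfc_predicate _ σ)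
  have hDD : D * D = cfc (· ^ ((α - 1) / α) : ℝ → ℝ) σ := by
    have hc := σ.continuousOn_spectrum_real
    rw [← cfc_mul _ _ σ (hc _) (hc _)]
    refine cfc_congr fun x hx => ?_
    have ht : -t + -t = (α - 1) / α := by simp only [t]; field_simp; ring
    rw [← Real.rpow_add' (spectrum_nonneg_of_nonneg hσ.nonneg hx) (by rw [ht]; positivity), ht]
  have hA := hρ.rpowH_mul_mul_rpowH hσ.1 t
  have hQu : star (D *ᵥ v) ⬝ᵥ (σ.rpowH t * ρ * σ.rpowH t) *ᵥ (D *ᵥ v) = star v ⬝ᵥ ρ *ᵥ v := by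
    rw [star_mulVec_dotProduct_mulVec_mulVec, hD, hσ.1.rpowH_eq_cfc,
      cfc_rpow_neg_mul_mul_eq_self hρ.1 hσ hsupp]
  have hSu : star (D *ᵥ v) ⬝ᵥ D *ᵥ v
      = star v ⬝ᵥ cfc (· ^ ((α - 1) / α) : ℝ → ℝ) σ *ᵥ v := by
    simpa [hD, hDD] using star_mulVec_dotProduct_mulVec_mulVec 1 D v
  have hlow := hA.div_rpow_le_re_trace_rpowH (u := D *ᵥ v) (by rwa [hSu]) (t := α) (by linarith)
  rw [hQu, hSu] at hlow
  calc _ = (α - 1)⁻¹ * Real.log (((star v ⬝ᵥ ρ *ᵥ v).re /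
        (star v ⬝ᵥ cfc (· ^ ((α - 1) / α) : ℝ → ℝ) σ *ᵥ v).re) ^ α) := by
        rw [Real.log_rpow (div_pos hQ hS)]
        ring
    _ ≤ sandwichedRenyi α ρ σ :=
        mul_le_mul_of_nonneg_left (Real.log_le_log (by positivity) hlow)
          (inv_nonneg.2 (by linarith))

lemma eventually_sandwichedRenyi_lt (hρ : ρ.PosSemidef) (hσ : σ.PosSemidef) (hσ1 : σ ≤ 1)
    (hsupp : ∀ v : m → ℂ, σ *ᵥ v = 0 → ρ *ᵥ v = 0) (hρ0 : ρ ≠ 0) {l : ℝ} (hl : 0 < l)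
    (h : ρ ≤ l • σ) {a : ℝ} (ha : Real.log l < a) :
    ∀ᶠ α in atTop, sandwichedRenyi α ρ σ < a := by
  have hlim : Tendsto (fun α : ℝ => (α - 1)⁻¹ * (Real.log (Fintype.card m) + α * Real.log l))
      atTop (𝓝 (Real.log l)) := by
    have h0 : Tendsto (fun α : ℝ => (α - 1)⁻¹) atTop (𝓝 0) :=
      tendsto_inv_atTop_zero.comp (tendsto_atTop_add_const_right _ (-1) tendsto_id)
    have := (h0.mul_const (Real.log (Fintype.card m) + Real.log l)).add_const (Real.log l)
    rw [zero_mul, zero_add] at this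
    refine this.congr' ?_
    filter_upwards [eventually_gt_atTop 1] with α hα
    have : α - 1 ≠ 0 := by linarith
    field_simp
    ring
  filter_upwards [hlim.eventually_lt_const ha, eventually_gt_atTop 1] with α hlt hα
  exact (sandwichedRenyi_le hρ hσ hσ1 hsupp hρ0 hl h hα).trans_lt hlt

lemma eventually_log_lt_sandwichedRenyi (hρ : ρ.PosSemidef) (hσ : σ.PosSemidef)
    (hsupp : ∀ v : m → ℂ, σ *ᵥ v = 0 → ρ *ᵥ v = 0) {l : ℝ} (hl : 0 < l) (h : ¬ ρ ≤ l • σ) :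
    ∀ᶠ α in atTop, Real.log l < sandwichedRenyi α ρ σ := by
  obtain ⟨v, hv⟩ := exists_re_dotProduct_mulVec_lt_of_not_le hρ.1 (hσ.smul hl.le).1 h
  set Q := (star v ⬝ᵥ ρ *ᵥ v).re
  set R := (star v ⬝ᵥ σ *ᵥ v).re
  have hlR : l * R < Q := by simpa [smul_mulVec, Complex.real_smul] using hv
  have hR0 : 0 ≤ R := hσ.re_dotProduct_nonneg v
  have hR : 0 < R := by
    refine hR0.lt_of_ne fun hR0' => ?_
    have hσv : σ *ᵥ v = 0 := (hσ.dotProduct_mulVec_zero_iff v).1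
      (Complex.ext hR0'.symm (hσ.1.im_star_dotProduct_mulVec_self v))
    simp only [Q, hsupp v hσv, dotProduct_zero, Complex.zero_re] at hlR
    linarith [mul_nonneg hl.le hR0]
  have hQ : 0 < Q := (mul_pos hl hR).trans hlR
  set S := fun α : ℝ => (star v ⬝ᵥ cfc (· ^ ((α - 1) / α) : ℝ → ℝ) σ *ᵥ v).re
  have hS : Tendsto S atTop (𝓝 R) :=
    ((by fun_prop : Continuous fun M : Matrix m m ℂ => (star v ⬝ᵥ M *ᵥ v).re).tendsto σ).comp
      (hσ.1.tendsto_cfc_rpow_nhds_one.comp tendsto_sub_one_div_atTop)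
  have hlim : Tendsto (fun α => α / (α - 1) * Real.log (Q / S α)) atTop (𝓝 (Real.log (Q / R))) := by
    simpa using tendsto_div_sub_one_atTop.mul
      ((Real.continuousAt_log (div_pos hQ hR).ne').tendsto.comp (tendsto_const_nhds.div hS hR.ne'))
  have hlt : Real.log l < Real.log (Q / R) := Real.log_lt_log hl ((lt_div_iff₀ hR).2 hlR)
  filter_upwards [hlim.eventually_const_lt hlt, hS.eventually_const_lt hR,
    eventually_gt_atTop 1] with α hlog hSα hα
  exact hlog.trans_le (le_sandwichedRenyi hρ hσ hsupp hα v hQ hSα)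

end SandwichedRenyi

/-- The sandwiched Rényi relative entropy converges to the relative max-entropy
`log inf {λ > 0 : ρ ≤ λσ}` as `α → ∞`. -/
theorem sandwichedRenyi_tendsto_maxEntropy {n : ℕ}
    (ρ σ : Matrix (Fin n) (Fin n) ℂ) (hρ : ρ.PosSemidef) (hσ : σ.PosSemidef)
    (hρ1 : ρ.trace = 1) (hσ1 : σ.trace = 1)
    (hsupp : ∀ v : Fin n → ℂ, σ.mulVec v = 0 → ρ.mulVec v = 0) :
    Filter.Tendsto (fun α : ℝ => sandwichedRenyi α ρ σ) Filter.atTop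
      (nhds (Real.log (sInf {l : ℝ | 0 < l ∧ (l • σ - ρ).PosSemidef}))) := by
  set S := {l : ℝ | 0 < l ∧ (l • σ - ρ).PosSemidef}
  have hS : S.Nonempty := exists_pos_le_smul_of_ker_le hρ.1 hσ hsupp
  have hpos : 0 < sInf S := one_pos.trans_le
    (le_csInf hS fun l hl => one_le_of_le_smul_of_trace_eq_one hρ1 hσ1 hl.2)
  have hρ0 : ρ ≠ 0 := by
    rintro rfl
    simp at hρ1
  refine tendsto_order.2 ⟨fun a ha => ?_, fun a ha => ?_⟩
  · have hnot : ¬ ρ ≤ Real.exp a • σ := fun h => ((Real.lt_log_iff_exp_lt hpos).1 ha).not_ge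
      (csInf_le ⟨0, fun _ hl => hl.1.le⟩ ⟨Real.exp_pos a, h⟩)
    simpa using eventually_log_lt_sandwichedRenyi hρ hσ hsupp (Real.exp_pos a) hnot
  · obtain ⟨l, hl, hlt⟩ := exists_lt_of_csInf_lt hS ((Real.log_lt_iff_lt_exp hpos).1 ha)
    exact eventually_sandwichedRenyi_lt hρ hσ (hσ.le_one_of_trace_eq_one hσ1) hsupp hρ0 hl.1 hl.2
      ((Real.log_lt_iff_lt_exp hl.1).2 hlt)
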